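/- arXiv:1401.0055 — 2 statements merged into one kernel-verified Lean document; each statement's English description precedes it below -/
import Mathlib

section
/- For every natural number n ≥ 0, the alternating sum ∑_{k=0}^{⌊n/2⌋} (-1)^k · C(n-k, k) · q^k · (1+q)^{n-2k} equals ∑_{i=0}^{n} q^i, as an identity of polynomials in the variable q over the integers. -/
open Polynomial Finset

/-!
Both sides satisfy the recurrence `u (n + 2) = (1 + q) u (n + 1) - q u n`, the characteristic
polynomial `t² - (1 + q) t + q = (t - 1) (t - q)` being the one of the geometric progressions
`1` and `qⁿ`. On the left this is Pascal's rule `C(n+1-k, k+1) = C(n-k, k) + C(n-k, k+1)`.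
More generally, with `a = x + y` and `b = x y` the left side expands the complete homogeneous
symmetric polynomial `∑ xⁱ yⁿ⁻ⁱ` in the elementary ones.
-/

section AltChooseSum

variable {R : Type*} [CommRing R]

def altChooseTerm (a b : R) (n k : ℕ) : R :=
  (-1) ^ k * ((n - k).choose k : R) * b ^ k * a ^ (n - 2 * k)

def altChooseSum (a b : R) (n : ℕ) : R :=
  ∑ k ∈ range (n / 2 + 1), altChooseTerm a b n k

variable (a b : R)

lemma altChooseTerm_eq_zero {n k : ℕ} (h : n < 2 * k) : altChooseTerm a b n k = 0 := by
  simp [altChooseTerm, Nat.choose_eq_zero_of_lt (show n - k < k by omega)]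

@[simp]
lemma altChooseTerm_zero_right (n : ℕ) : altChooseTerm a b n 0 = a ^ n := by
  simp [altChooseTerm]

lemma altChooseTerm_add_two_succ (n k : ℕ) :
    altChooseTerm a b (n + 2) (k + 1) = a * altChooseTerm a b (n + 1) (k + 1) -
      b * altChooseTerm a b n k := by
  rcases lt_or_ge n (2 * k) with h | h
  · simp [altChooseTerm_eq_zero a b h, altChooseTerm_eq_zero a b (show n + 1 < 2 * (k + 1) by omega),
      altChooseTerm_eq_zero a b (show n + 2 < 2 * (k + 1) by omega)]
  obtain ⟨m, rfl⟩ := Nat.exists_eq_add_of_le h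
  have pascal := Nat.choose_succ_succ (k + m) k
  simp only [altChooseTerm, show 2 * k + m + 2 - (k + 1) = k + m + 1 by omega,
    show 2 * k + m + 2 - 2 * (k + 1) = m by omega, show 2 * k + m + 1 - (k + 1) = k + m by omega,
    show 2 * k + m + 1 - 2 * (k + 1) = m - 1 by omega, show 2 * k + m - k = k + m by omega,
    show 2 * k + m - 2 * k = m by omega, pascal, Nat.cast_add]
  rcases m with _ | m
  · simp
    ring
  · simp only [add_tsub_cancel_right]
    ring

lemma altChooseSum_eq_sum_range {n N : ℕ} (h : n / 2 < N) :
    altChooseSum a b n = ∑ k ∈ range N, altChooseTerm a b n k := by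
  refine sum_subset (range_subset_range.2 (by omega)) fun k _ hk => ?_
  exact altChooseTerm_eq_zero a b (by simp only [mem_range] at hk; omega)

lemma altChooseSum_add_two (n : ℕ) :
    altChooseSum a b (n + 2) = a * altChooseSum a b (n + 1) - b * altChooseSum a b n := by
  rw [altChooseSum_eq_sum_range a b (show (n + 2) / 2 < n / 2 + 2 by omega),
    altChooseSum_eq_sum_range a b (show (n + 1) / 2 < n / 2 + 2 by omega), altChooseSum,
    sum_range_succ', sum_range_succ' _ (n / 2 + 1)]
  simp only [altChooseTerm_add_two_succ, sum_sub_distrib, mul_add, mul_sum,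
    altChooseTerm_zero_right, pow_succ' a (n + 1)]
  ring

lemma altChooseSum_add_mul (x y : R) (n : ℕ) :
    altChooseSum (x + y) (x * y) n = ∑ i ∈ range (n + 1), x ^ i * y ^ (n - i) := by
  induction n using Nat.twoStepInduction with
  | zero => simp [altChooseSum]
  | one => simp [altChooseSum, sum_range_succ, add_comm]
  | more n ih ih' =>
    have step (m : ℕ) : ∑ i ∈ range (m + 1 + 1), x ^ i * y ^ (m + 1 - i) =
        x ^ (m + 1) + y * ∑ i ∈ range (m + 1), x ^ i * y ^ (m - i) := by
      simpa using geom_sum₂_succ_eq x y (n := m + 1)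
    rw [altChooseSum_add_two, ih, ih', show n + 2 = n + 1 + 1 from rfl, step (n + 1), step n]
    ring

end AltChooseSum

theorem stmt_0 (n : ℕ) :
    ∑ k ∈ Finset.range (n / 2 + 1),
      ((-1 : Polynomial ℤ) ^ k * (Nat.choose (n - k) k : Polynomial ℤ) *
        X ^ k * (1 + X) ^ (n - 2 * k))
    = ∑ i ∈ Finset.range (n + 1), X ^ i := by
  have h := altChooseSum_add_mul (X : ℤ[X]) 1 n
  simp only [mul_one, one_pow, add_comm X 1] at h
  exact h
end

section
/- Define vectors in ℤ² (simple-root coordinates for B_2) by 2α̃ = (2,4), where α̃ = (1,2) is the highest root of B_2, and 2ρ = (3,4), and let the Weyl group of B_2 be generated by the linear maps s₁, s₂ on ℤ² given on the basis by s₁(α₁)=−α₁, s₁(α₂)=α₁+α₂ and s₂(α₁)=α₁+2α₂, s₂(α₂)=−α₂. Then the set of the 8 elements w of this Weyl group for which w(2α̃ + 2ρ) − 2ρ has both coordinates nonnegative is exactly {1, s₁}. -/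
/-- The simple reflection `s₁` of `B₂` acting on the root lattice `ℤα₁ ⊕ ℤα₂`:
`s₁(α₁) = -α₁`, `s₁(α₂) = α₁ + α₂`. -/
def s1 : ℤ × ℤ → ℤ × ℤ := fun p => (p.2 - p.1, p.2)

/-- The simple reflection `s₂` of `B₂` acting on the root lattice:
`s₂(α₂) = -α₂`, `s₂(α₁) = α₁ + 2α₂`. -/
def s2 : ℤ × ℤ → ℤ × ℤ := fun p => (p.1, 2 * p.1 - p.2)

/-- The Weyl group of `B₂`: the dihedral group of order 8 generated by `s₁` and `s₂`. -/
def weylB2 : Set ((ℤ × ℤ) → (ℤ × ℤ)) :=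
  {id, s1, s2, s1 ∘ s2, s2 ∘ s1, s1 ∘ s2 ∘ s1, s2 ∘ s1 ∘ s2, s1 ∘ s2 ∘ s1 ∘ s2}

/-- `2α̃ + 2ρ = (2,4) + (3,4) = (5,8)` in simple-root coordinates. -/
def v : ℤ × ℤ := ((2, 4) : ℤ × ℤ) + (3, 4)

theorem stmt_19 :
    {w ∈ weylB2 | 0 ≤ (w v - (3, 4)).1 ∧ 0 ≤ (w v - (3, 4)).2}
      = ({id, s1} : Set ((ℤ × ℤ) → (ℤ × ℤ))) := by
  ext w
  simp only [Set.mem_setOf_eq, weylB2, Set.mem_insert_iff, Set.mem_singleton_iff]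
  constructor
  · rintro ⟨h | h | h | h | h | h | h | h, h1, h2⟩ <;> subst h <;>
      simp_all [s1, s2, v, Prod.ext_iff]
  · rintro (h | h) <;> subst h <;> norm_num [s1, s2, v]
end
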